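/- For any x ∈ ℝⁿ, sparsity level s, and radius r > 0, a solution to argmin_w ‖x − w‖₂ subject to ‖w‖₂ ≤ r and ‖w‖₀ ≤ s is given by w* = x_s if ‖x_s‖₂ ≤ r, and w* = (r/‖x_s‖₂)·x_s otherwise, where x_s is the best s-term approximation of x. -/

import Mathlib

/-!
For `w` supported on `T`, Pythagoras gives `‖x - w‖² = ‖x‖² - ‖x_T‖² + ‖x_T - w‖²`, and
`‖x_T - w‖ ≥ max (‖x_T‖ - r) 0` when `‖w‖ ≤ r`. Hence `‖x - w‖² ≥ ‖x‖² - g ‖x_T‖` with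
`g τ = τ² - max (τ - r) 0 ²`, which is nondecreasing, and `‖x_T‖ ≤ ‖x_S‖` because `S` carries
the `s` largest entries. The candidate `w*` attains `‖x‖² - g ‖x_S‖`.
-/

open Finset

/-- Restriction of `x` to the index set `S` (zero outside `S`). -/
noncomputable def restr {n : ℕ} (x : EuclideanSpace ℝ (Fin n)) (S : Finset (Fin n)) :
    EuclideanSpace ℝ (Fin n) := WithLp.toLp 2 (fun i => if i ∈ S then x i else 0)

lemma Finset.sum_le_sum_of_card_le_of_forall_le {ι M : Type*} [AddCommMonoid M] [LinearOrder M]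
    [IsOrderedAddMonoid M] {f : ι → M} {S T : Finset ι} (hf : ∀ i ∈ S, 0 ≤ f i)
    (hcard : T.card ≤ S.card) (hS : ∀ i ∈ S, ∀ j ∉ S, f j ≤ f i) :
    ∑ i ∈ T, f i ≤ ∑ i ∈ S, f i := by
  classical
  have hcard' : (T \ S).card ≤ (S \ T).card := card_sdiff_le_card_sdiff_iff.2 hcard
  have hdiff : ∑ i ∈ T \ S, f i ≤ ∑ i ∈ S \ T, f i := by
    obtain h | hne := (S \ T).eq_empty_or_nonempty
    · rw [h, card_empty, Nat.le_zero, card_eq_zero] at hcard'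
      simp [h, hcard']
    · let m := (S \ T).inf' hne f
      have hm : 0 ≤ m := le_inf' hne f fun j hj => hf j (mem_sdiff.1 hj).1
      calc ∑ i ∈ T \ S, f i ≤ (T \ S).card • m :=
            sum_le_card_nsmul _ _ _ fun i hi =>
              le_inf' hne f fun j hj => hS j (mem_sdiff.1 hj).1 i (mem_sdiff.1 hi).2
        _ ≤ (S \ T).card • m := nsmul_le_nsmul_left hm hcard'
        _ ≤ ∑ i ∈ S \ T, f i := card_nsmul_le_sum _ _ _ fun j hj => inf'_le f hj
  rw [← sum_inter_add_sum_sdiff T S, ← sum_inter_add_sum_sdiff S T, inter_comm]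
  exact add_le_add le_rfl hdiff

lemma card_filter_ne_zero_le {n : ℕ} {y : EuclideanSpace ℝ (Fin n)} {T : Finset (Fin n)}
    (hy : ∀ i ∉ T, y i = 0) : (univ.filter fun i => y i ≠ 0).card ≤ T.card :=
  card_le_card fun i hi => by_contra fun h => (mem_filter.1 hi).2 (hy i h)

section radialProj

variable {E : Type*} [NormedAddCommGroup E] [NormedSpace ℝ E]

noncomputable def radialProj (r : ℝ) (v : E) : E :=
  if ‖v‖ ≤ r then v else (r / ‖v‖) • v

lemma radialProj_eq_smul (r : ℝ) (v : E) : ∃ c : ℝ, radialProj r v = c • v := by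
  unfold radialProj
  split_ifs
  exacts [⟨1, (one_smul ℝ v).symm⟩, ⟨_, rfl⟩]

lemma norm_radialProj_le {r : ℝ} (hr : 0 ≤ r) (v : E) : ‖radialProj r v‖ ≤ r := by
  unfold radialProj
  split_ifs with h
  · exact h
  · have hv : 0 < ‖v‖ := hr.trans_lt (not_le.1 h)
    rw [norm_smul, Real.norm_of_nonneg (by positivity), div_mul_cancel₀ _ hv.ne']

lemma norm_sub_radialProj {r : ℝ} (hr : 0 ≤ r) (v : E) :
    ‖v - radialProj r v‖ = max (‖v‖ - r) 0 := by
  unfold radialProj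
  split_ifs with h
  · simp [h]
  · have hv : 0 < ‖v‖ := hr.trans_lt (not_le.1 h)
    have hrv : r / ‖v‖ ≤ 1 := (div_le_one hv).2 (not_le.1 h).le
    have hsub : v - (r / ‖v‖) • v = (1 - r / ‖v‖) • v := by rw [sub_smul, one_smul]
    rw [hsub, norm_smul, Real.norm_of_nonneg (sub_nonneg.2 hrv), sub_mul, one_mul,
      div_mul_cancel₀ _ hv.ne', max_eq_left (by linarith)]

end radialProj

lemma sq_sub_sq_le_sq_sub_max_sq {τ t r d : ℝ} (hτ : 0 ≤ τ) (hτt : τ ≤ t) (hr : 0 ≤ r)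
    (hτd : τ - r ≤ d) : τ ^ 2 - d ^ 2 ≤ t ^ 2 - max (t - r) 0 ^ 2 := by
  rcases le_total t r with h | h
  · rw [max_eq_right (by linarith)]
    nlinarith
  · rw [max_eq_left (by linarith)]
    rcases le_total τ r with h' | h' <;> nlinarith

section restr

variable {n : ℕ}

lemma norm_restr_sq (x : EuclideanSpace ℝ (Fin n)) (S : Finset (Fin n)) :
    ‖restr x S‖ ^ 2 = ∑ i ∈ S, x i ^ 2 := by
  simp [EuclideanSpace.real_norm_sq_eq, restr, ite_pow]

lemma norm_restr_le_norm_restr (x : EuclideanSpace ℝ (Fin n)) {S T : Finset (Fin n)}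
    (hcard : T.card ≤ S.card) (hS : ∀ i ∈ S, ∀ j ∉ S, |x j| ≤ |x i|) :
    ‖restr x T‖ ≤ ‖restr x S‖ := by
  rw [← sq_le_sq₀ (norm_nonneg _) (norm_nonneg _), norm_restr_sq, norm_restr_sq]
  exact sum_le_sum_of_card_le_of_forall_le (fun i _ => sq_nonneg _) hcard
    fun i hi j hj => sq_le_sq.2 (hS i hi j hj)

lemma inner_sub_restr_eq_zero (x : EuclideanSpace ℝ (Fin n)) {y : EuclideanSpace ℝ (Fin n)}
    {T : Finset (Fin n)} (hy : ∀ i ∉ T, y i = 0) : inner ℝ (x - restr x T) y = 0 := by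
  rw [PiLp.inner_apply]
  refine sum_eq_zero fun i _ => ?_
  by_cases hi : i ∈ T <;> simp [restr, hi, hy]

lemma norm_sub_sq_eq_of_support (x : EuclideanSpace ℝ (Fin n)) {w : EuclideanSpace ℝ (Fin n)}
    {T : Finset (Fin n)} (hw : ∀ i ∉ T, w i = 0) :
    ‖x - w‖ ^ 2 = ‖x‖ ^ 2 - ‖restr x T‖ ^ 2 + ‖restr x T - w‖ ^ 2 := by
  have hsplit (v : EuclideanSpace ℝ (Fin n)) (hv : ∀ i ∉ T, v i = 0) :
      ‖x - v‖ ^ 2 = ‖x - restr x T‖ ^ 2 + ‖restr x T - v‖ ^ 2 := by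
    have := norm_add_sq_real (x - restr x T) (restr x T - v)
    rwa [inner_sub_restr_eq_zero x fun i hi => by simp [restr, hi, hv i hi], mul_zero, add_zero,
      sub_add_sub_cancel] at this
  have h0 := hsplit 0 fun _ _ => rfl
  rw [sub_zero, sub_zero] at h0
  rw [hsplit w hw]
  linarith

end restr

theorem stmt_3_general {n : ℕ} (x : EuclideanSpace ℝ (Fin n)) (s : ℕ) (r : ℝ)
    (hr : 0 < r) (S : Finset (Fin n)) (hScard : S.card = s)
    (hSmax : ∀ i ∈ S, ∀ j ∉ S, |x j| ≤ |x i|)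
    (xs wstar : EuclideanSpace ℝ (Fin n)) (hxs : xs = restr x S)
    (hwstar : wstar = if ‖xs‖ ≤ r then xs else (r / ‖xs‖) • xs) :
    ‖wstar‖ ≤ r ∧ (Finset.univ.filter fun i => wstar i ≠ 0).card ≤ s ∧
      ∀ w : EuclideanSpace ℝ (Fin n),
        ‖w‖ ≤ r → (Finset.univ.filter fun i => w i ≠ 0).card ≤ s →
          ‖x - wstar‖ ≤ ‖x - w‖ := by
  change wstar = radialProj r xs at hwstar
  subst hxs hwstar
  have hsupp : ∀ i ∉ S, radialProj r (restr x S) i = 0 := by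
    obtain ⟨c, hc⟩ := radialProj_eq_smul r (restr x S)
    intro i hi
    rw [hc, PiLp.smul_apply]
    simp [restr, hi]
  refine ⟨norm_radialProj_le hr.le _, hScard ▸ card_filter_ne_zero_le hsupp, fun w hw hwc => ?_⟩
  set T := univ.filter fun i => w i ≠ 0
  have hwT : ∀ i ∉ T, w i = 0 := by simp [T]
  have hTS : ‖restr x T‖ ≤ ‖restr x S‖ := norm_restr_le_norm_restr x (hScard ▸ hwc) hSmax
  have hdist : ‖restr x T‖ - r ≤ ‖restr x T - w‖ := by
    linarith [norm_sub_norm_le (restr x T) w]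
  rw [← sq_le_sq₀ (norm_nonneg _) (norm_nonneg _), norm_sub_sq_eq_of_support x hsupp,
    norm_sub_sq_eq_of_support x hwT, norm_sub_radialProj hr.le]
  linarith [sq_sub_sq_le_sq_sub_max_sq (norm_nonneg _) hTS hr.le hdist]

/-- Bounded Sparse Projection: if `x_s = x|_S` is the best `s`-term approximation of `x`
(`S` a set of `s` largest-magnitude entries of `x`), then `w* = x_s` if `‖x_s‖ ≤ r` and
`w* = (r/‖x_s‖) • x_s` otherwise solves `min ‖x − w‖₂` s.t. `‖w‖₂ ≤ r`, `‖w‖₀ ≤ s`. -/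
theorem stmt_3 {n : ℕ} (x : EuclideanSpace ℝ (Fin n)) (s : ℕ) (hs : s ≤ n) (r : ℝ)
    (hr : 0 < r) (S : Finset (Fin n)) (hScard : S.card = s)
    (hSmax : ∀ i ∈ S, ∀ j ∉ S, |x j| ≤ |x i|)
    (xs wstar : EuclideanSpace ℝ (Fin n)) (hxs : xs = restr x S)
    (hwstar : wstar = if ‖xs‖ ≤ r then xs else (r / ‖xs‖) • xs) :
    ‖wstar‖ ≤ r ∧ (Finset.univ.filter fun i => wstar i ≠ 0).card ≤ s ∧
      ∀ w : EuclideanSpace ℝ (Fin n),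
        ‖w‖ ≤ r → (Finset.univ.filter fun i => w i ≠ 0).card ≤ s →
          ‖x - wstar‖ ≤ ‖x - w‖ :=
  stmt_3_general x s r hr S hScard hSmax xs wstar hxs hwstar
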